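/- Let λ ∈ k* be a non-root of unity and A generated by x, y, z with xy - yx = 1, xz = λzx, yz = λ⁻¹zy. Then A/[A,A] is spanned as a k-vector space by the classes of 1 and z^s for s ≥ 1; moreover the class of 1 is zero (1 = [x,y] ∈ [A,A]), so A/[A,A] ≅ ⊕_{s≥1} k·z̄^s. -/

import Mathlib

/-!
Commutators with the generators act almost diagonally on the PBW monomials `x^a y^b z^c`.
Bracketing with `z` multiplies `x^a y^b z^c` by `λ^(b-a) - 1` (and raises `c`), which kills
every monomial with `a ≠ b` and `c ≥ 1`; `[y, x^(a+1) y^b] = -(a+1) x^a y^b` kills `c = 0`;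
and `[x, x^a y^(a+1) z^c]` expresses `x^(a+1) y^(a+1) z^c` through `x^a y^a z^c`, so modulo
`[A,A]` everything reduces to the `z^c` with `c ≥ 1`. Conversely, for each `g ≥ 1` the
functional supported on the monomials `x^a y^a z^g`, with value `a! / (1 - λ^g)^a`, is killed
by commutators with `x`, `y`, `z`, hence by `[A,A]`, and it separates `z^g` from the other
powers of `z`.
-/

open Submodule

section

variable {k A : Type*} [Field k] [Ring A] [Algebra k A]

variable (k A) in
def commutatorSpan : Submodule k A :=
  span k {w : A | ∃ a b : A, w = a * b - b * a}

theorem commutator_mem_commutatorSpan (a b : A) : a * b - b * a ∈ commutatorSpan k A :=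
  subset_span ⟨a, b, rfl⟩

section Trace

variable {M : Type*} [AddCommGroup M] [Module k M] (Φ : A →ₗ[k] M)

theorem LinearMap.map_mul_comm_of_adjoin_eq_top {s : Set A} (hs : Algebra.adjoin k s = ⊤)
    (h : ∀ g ∈ s, ∀ m, Φ (g * m) = Φ (m * g)) (a b : A) : Φ (a * b) = Φ (b * a) := by
  have ha : a ∈ Algebra.adjoin k s := hs ▸ Algebra.mem_top
  induction ha using Algebra.adjoin_induction generalizing b with
  | mem g hg => exact h g hg b
  | algebraMap r => rw [Algebra.commutes]
  | add a₁ a₂ _ _ h₁ h₂ => rw [add_mul, mul_add, map_add, map_add, h₁, h₂]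
  | mul a₁ a₂ _ _ h₁ h₂ => rw [mul_assoc, h₁, mul_assoc, h₂, mul_assoc]

theorem LinearMap.commutatorSpan_le_ker {s : Set A} (hs : Algebra.adjoin k s = ⊤)
    (h : ∀ g ∈ s, ∀ m, Φ (g * m) = Φ (m * g)) : commutatorSpan k A ≤ LinearMap.ker Φ :=
  span_le.2 fun _ ⟨a, b, hw⟩ => by
    simp [hw, Φ.map_mul_comm_of_adjoin_eq_top hs h a b]

theorem LinearMap.map_mul_comm_of_basis {ι : Type*} (bA : Module.Basis ι k A) {g : A}
    (h : ∀ i, Φ (g * bA i - bA i * g) = 0) (m : A) : Φ (g * m) = Φ (m * g) := by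
  have hext : Φ ∘ₗ LinearMap.mulLeft k g = Φ ∘ₗ LinearMap.mulRight k g :=
    bA.ext fun i => by simpa [sub_eq_zero] using h i
  exact LinearMap.congr_fun hext m

end Trace

section Weyl

variable {R : Type*} [Ring R] {x y : R} (h : x * y - y * x = 1) (n : ℕ)
include h

theorem mul_pow_sub_pow_mul_of_mul_sub_mul_eq_one :
    x * y ^ n - y ^ n * x = n • y ^ (n - 1) := by
  induction n with
  | zero => simp
  | succ n ih =>
    calc x * y ^ (n + 1) - y ^ (n + 1) * x
        = (x * y ^ n - y ^ n * x) * y + y ^ n * (x * y - y * x) := by noncomm_ring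
      _ = (n + 1) • y ^ n := by
        rw [ih, h, mul_one, smul_mul_assoc, ← pow_succ, succ_nsmul]
        cases n <;> simp

theorem pow_mul_eq_of_mul_sub_mul_eq_one : y ^ n * x = x * y ^ n - n • y ^ (n - 1) := by
  rw [← mul_pow_sub_pow_mul_of_mul_sub_mul_eq_one h, sub_sub_cancel]

theorem mul_pow_eq_of_mul_sub_mul_eq_one : y * x ^ n = x ^ n * y - n • x ^ (n - 1) := by
  have h' : -y * x - x * -y = 1 := by rw [← h]; noncomm_ring
  rw [← mul_pow_sub_pow_mul_of_mul_sub_mul_eq_one h']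
  noncomm_ring

end Weyl

section QCommute

variable {a b : A} {q : k} (h : a * b = q • (b * a)) (n : ℕ)
include h

theorem mul_pow_eq_smul_of_mul_eq_smul : a * b ^ n = q ^ n • (b ^ n * a) := by
  induction n with
  | zero => simp
  | succ n ih =>
    rw [pow_succ, ← mul_assoc, ih, smul_mul_assoc, mul_assoc, h, mul_smul_comm, smul_smul,
      ← mul_assoc, pow_succ]

theorem pow_mul_eq_smul_of_mul_eq_smul : a ^ n * b = q ^ n • (b * a ^ n) := by
  induction n with
  | zero => simp
  | succ n ih =>
    rw [pow_succ, mul_assoc, h, mul_smul_comm, ← mul_assoc, ih, smul_mul_assoc, smul_smul,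
      mul_assoc, ← pow_succ, ← pow_succ']

theorem mul_eq_inv_smul_of_mul_eq_smul (hq : q ≠ 0) : b * a = q⁻¹ • (a * b) := by
  rw [h, smul_smul, inv_mul_cancel₀ hq, one_smul]

end QCommute

section PBW

variable {x y z : A} {l : k}

-- For `b = 0` the truncated `b - 1` is harmless: its coefficient vanishes.
theorem commutator_x_monomial (hxy : x * y - y * x = 1) (hzx : z * x = l⁻¹ • (x * z))
    (a b c : ℕ) :
    x * (x ^ a * y ^ b * z ^ c) - x ^ a * y ^ b * z ^ c * x =
      (1 - l⁻¹ ^ c) • (x ^ (a + 1) * y ^ b * z ^ c) +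
        ((b : k) * l⁻¹ ^ c) • (x ^ a * y ^ (b - 1) * z ^ c) := by
  have hmx : x ^ a * y ^ b * z ^ c * x =
      l⁻¹ ^ c • (x ^ (a + 1) * y ^ b * z ^ c - b • (x ^ a * y ^ (b - 1) * z ^ c)) := by
    rw [mul_assoc, pow_mul_eq_smul_of_mul_eq_smul hzx, mul_smul_comm, ← mul_assoc,
      mul_assoc (x ^ a), pow_mul_eq_of_mul_sub_mul_eq_one hxy, pow_succ]
    noncomm_ring
  rw [hmx, ← mul_assoc, ← mul_assoc, ← pow_succ', ← Nat.cast_smul_eq_nsmul k]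
  module

theorem commutator_y_monomial (hxy : x * y - y * x = 1) (hzy : z * y = l • (y * z))
    (a b c : ℕ) :
    y * (x ^ a * y ^ b * z ^ c) - x ^ a * y ^ b * z ^ c * y =
      (1 - l ^ c) • (x ^ a * y ^ (b + 1) * z ^ c) -
        (a : k) • (x ^ (a - 1) * y ^ b * z ^ c) := by
  have hym : y * (x ^ a * y ^ b * z ^ c) =
      x ^ a * y ^ (b + 1) * z ^ c - a • (x ^ (a - 1) * y ^ b * z ^ c) := by
    rw [← mul_assoc, ← mul_assoc, mul_pow_eq_of_mul_sub_mul_eq_one hxy, pow_succ']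
    noncomm_ring
  have hmy : x ^ a * y ^ b * z ^ c * y = l ^ c • (x ^ a * y ^ (b + 1) * z ^ c) := by
    rw [mul_assoc, pow_mul_eq_smul_of_mul_eq_smul hzy, mul_smul_comm, ← mul_assoc,
      mul_assoc (x ^ a), ← pow_succ]
  rw [hym, hmy, ← Nat.cast_smul_eq_nsmul k]
  module

theorem commutator_z_monomial (hzx : z * x = l⁻¹ • (x * z)) (hzy : z * y = l • (y * z))
    (a b c : ℕ) :
    z * (x ^ a * y ^ b * z ^ c) - x ^ a * y ^ b * z ^ c * z =
      (l⁻¹ ^ a * l ^ b - 1) • (x ^ a * y ^ b * z ^ (c + 1)) := by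
  have hzm :
      z * (x ^ a * y ^ b * z ^ c) = (l⁻¹ ^ a * l ^ b) • (x ^ a * y ^ b * z ^ (c + 1)) := by
    rw [← mul_assoc, ← mul_assoc, mul_pow_eq_smul_of_mul_eq_smul hzx, smul_mul_assoc,
      smul_mul_assoc, mul_assoc (x ^ a) z, mul_pow_eq_smul_of_mul_eq_smul hzy, pow_succ']
    simp only [mul_smul_comm, smul_mul_assoc, smul_smul, mul_assoc]
  rw [hzm, mul_assoc _ (z ^ c), ← pow_succ]
  module

end PBW

theorem ne_zero_of_injective_pow {M₀ : Type*} [MonoidWithZero M₀] {a : M₀}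
    (h : Function.Injective (a ^ · : ℕ → M₀)) : a ≠ 0 := by
  rintro rfl
  exact absurd (h (a₁ := 1) (a₂ := 2) (by simp)) (by norm_num)

section Spanning

variable {x y z : A} {l : k}

theorem pow_mul_pow_mem_commutatorSpan [CharZero k] (hxy : x * y - y * x = 1) (a b : ℕ) :
    x ^ a * y ^ b ∈ commutatorSpan k A := by
  have hne : -((a + 1 : ℕ) : k) ≠ 0 := neg_ne_zero.2 (Nat.cast_ne_zero.2 a.succ_ne_zero)
  have e : y * (x ^ (a + 1) * y ^ b) - x ^ (a + 1) * y ^ b * y =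
      -((a + 1 : ℕ) : k) • (x ^ a * y ^ b) := by
    rw [← mul_assoc, mul_pow_eq_of_mul_sub_mul_eq_one hxy, mul_assoc _ (y ^ b), pow_mul_comm',
      Nat.add_sub_cancel, ← Nat.cast_smul_eq_nsmul k, neg_smul]
    noncomm_ring
  rw [← smul_mem_iff _ hne, ← e]
  exact commutator_mem_commutatorSpan _ _

theorem monomial_mem_commutatorSpan_of_ne (hl : Function.Injective (l ^ · : ℕ → k))
    (hzx : z * x = l⁻¹ • (x * z)) (hzy : z * y = l • (y * z)) {a b : ℕ} (hab : a ≠ b)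
    (c : ℕ) : x ^ a * y ^ b * z ^ (c + 1) ∈ commutatorSpan k A := by
  have hcoef : l⁻¹ ^ a * l ^ b - 1 ≠ 0 := by
    rw [sub_ne_zero, inv_pow, Ne, inv_mul_eq_one₀ (pow_ne_zero a (ne_zero_of_injective_pow hl))]
    exact hl.ne hab
  rw [← smul_mem_iff _ hcoef, ← commutator_z_monomial hzx hzy]
  exact commutator_mem_commutatorSpan _ _

theorem diagonal_monomial_mem_sup (hl : Function.Injective (l ^ · : ℕ → k))
    (hxy : x * y - y * x = 1) (hzx : z * x = l⁻¹ • (x * z)) (a c : ℕ) :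
    x ^ a * y ^ a * z ^ (c + 1) ∈
      span k (Set.range fun s : ℕ => z ^ (s + 1)) ⊔ commutatorSpan k A := by
  induction a with
  | zero =>
    rw [pow_zero, pow_zero, one_mul, one_mul]
    exact mem_sup_left (subset_span ⟨c, rfl⟩)
  | succ a ih =>
    have hcoef : (1 : k) - l⁻¹ ^ (c + 1) ≠ 0 := by
      rw [sub_ne_zero, ne_comm, inv_pow, Ne, inv_eq_one, ← pow_zero l]
      exact hl.ne (by omega)
    have h := commutator_x_monomial hxy hzx a (a + 1) (c + 1)
    rw [Nat.add_sub_cancel] at h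
    rw [← smul_mem_iff _ hcoef, eq_sub_of_add_eq h.symm]
    exact sub_mem (mem_sup_right (commutator_mem_commutatorSpan _ _)) (smul_mem _ _ ih)

theorem monomial_mem_sup [CharZero k] (hl : Function.Injective (l ^ · : ℕ → k))
    (hxy : x * y - y * x = 1) (hzx : z * x = l⁻¹ • (x * z)) (hzy : z * y = l • (y * z))
    (a b c : ℕ) :
    x ^ a * y ^ b * z ^ c ∈
      span k (Set.range fun s : ℕ => z ^ (s + 1)) ⊔ commutatorSpan k A := by
  rcases c with _ | c
  · simpa using mem_sup_right (pow_mul_pow_mem_commutatorSpan hxy a b)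
  rcases eq_or_ne a b with rfl | hab
  · exact diagonal_monomial_mem_sup hl hxy hzx a c
  · exact mem_sup_right (monomial_mem_commutatorSpan_of_ne hl hzx hzy hab c)

end Spanning

section TraceFunctional

/-- The values `a! / (1 - l^g)^a` solve the recursion `(1 - l^g) t (a + 1) = (a + 1) t a` that
`[x, ·]` and `[y, ·]` impose on the diagonal monomials `x^a y^a z^g`, normalised by `t 0 = 1`. -/
noncomputable def traceFunctional (bA : Module.Basis (ℕ × ℕ × ℕ) k A) (l : k) (g : ℕ) :
    A →ₗ[k] k :=
  bA.constr k fun p =>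
    if p.1 = p.2.1 ∧ p.2.2 = g then (p.1.factorial : k) / (1 - l ^ g) ^ p.1 else 0

variable {x y z : A} {l : k} (bA : Module.Basis (ℕ × ℕ × ℕ) k A)
  (hbA : ∀ p : ℕ × ℕ × ℕ, bA p = x ^ p.1 * y ^ p.2.1 * z ^ p.2.2)
include hbA

theorem traceFunctional_monomial (g a b c : ℕ) :
    traceFunctional bA l g (x ^ a * y ^ b * z ^ c) =
      if a = b ∧ c = g then (a.factorial : k) / (1 - l ^ g) ^ a else 0 := by
  rw [← hbA (a, b, c), traceFunctional, Module.Basis.constr_basis]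

theorem traceFunctional_mul_x_comm (hl : l ≠ 0) (hxy : x * y - y * x = 1)
    (hzx : z * x = l⁻¹ • (x * z)) {g : ℕ} (hg : l ^ g ≠ 1) (m : A) :
    traceFunctional bA l g (x * m) = traceFunctional bA l g (m * x) := by
  refine LinearMap.map_mul_comm_of_basis _ bA (fun ⟨a, b, c⟩ => ?_) m
  have hg' : 1 - l ^ g ≠ 0 := sub_ne_zero.2 hg.symm
  simp only [hbA]
  rw [commutator_x_monomial hxy hzx, map_add, map_smul, map_smul,
    traceFunctional_monomial bA hbA, traceFunctional_monomial bA hbA, smul_eq_mul, smul_eq_mul]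
  split_ifs with h₁ h₂ h₂
  · obtain ⟨rfl, rfl⟩ := h₁
    rw [Nat.factorial_succ, inv_pow]
    push_cast
    field_simp
    ring
  · omega
  · obtain rfl : b = 0 := by omega
    simp
  · simp

theorem traceFunctional_mul_y_comm (hxy : x * y - y * x = 1)
    (hzy : z * y = l • (y * z)) {g : ℕ} (hg : l ^ g ≠ 1) (m : A) :
    traceFunctional bA l g (y * m) = traceFunctional bA l g (m * y) := by
  refine LinearMap.map_mul_comm_of_basis _ bA (fun ⟨a, b, c⟩ => ?_) m
  have hg' : 1 - l ^ g ≠ 0 := sub_ne_zero.2 hg.symm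
  simp only [hbA]
  rw [commutator_y_monomial hxy hzy, map_sub, map_smul, map_smul,
    traceFunctional_monomial bA hbA, traceFunctional_monomial bA hbA, smul_eq_mul, smul_eq_mul]
  split_ifs with h₁ h₂ h₂
  · obtain ⟨rfl, rfl⟩ := h₁
    rw [Nat.add_sub_cancel, Nat.factorial_succ]
    push_cast
    field_simp
    ring
  · omega
  · obtain rfl : a = 0 := by omega
    simp
  · simp

theorem traceFunctional_mul_z_comm (hl : l ≠ 0) (hzx : z * x = l⁻¹ • (x * z))
    (hzy : z * y = l • (y * z)) (g : ℕ) (m : A) :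
    traceFunctional bA l g (z * m) = traceFunctional bA l g (m * z) := by
  refine LinearMap.map_mul_comm_of_basis _ bA (fun ⟨a, b, c⟩ => ?_) m
  simp only [hbA]
  rw [commutator_z_monomial hzx hzy, map_smul, traceFunctional_monomial bA hbA, smul_eq_mul]
  split_ifs with h
  · rw [h.1, inv_pow, inv_mul_cancel₀ (pow_ne_zero b hl), sub_self, zero_mul]
  · rw [mul_zero]

theorem traceFunctional_z_pow (g s : ℕ) :
    traceFunctional bA l g (z ^ s) = if s = g then 1 else 0 := by
  simpa using traceFunctional_monomial bA hbA (l := l) g 0 0 s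

end TraceFunctional

theorem Module.Basis.eq_top_of_forall_mem {ι M : Type*} [AddCommGroup M] [Module k M]
    (b : Module.Basis ι k M) {P : Submodule k M} (h : ∀ i, b i ∈ P) : P = ⊤ :=
  eq_top_iff.2 (b.span_eq ▸ span_le.2 (Set.range_subset_iff.2 h))

section PBWBasis

variable {x y z : A} (bA : Module.Basis (ℕ × ℕ × ℕ) k A)
  (hbA : ∀ p : ℕ × ℕ × ℕ, bA p = x ^ p.1 * y ^ p.2.1 * z ^ p.2.2)
include hbA

theorem adjoin_eq_top_of_pbwBasis : Algebra.adjoin k {x, y, z} = ⊤ := by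
  have hgen : ∀ g ∈ ({x, y, z} : Set A), ∀ n : ℕ, g ^ n ∈ Algebra.adjoin k {x, y, z} :=
    fun g hg n => pow_mem (Algebra.subset_adjoin hg) n
  refine Algebra.toSubmodule_eq_top.1 (bA.eq_top_of_forall_mem fun p => ?_)
  rw [hbA, Subalgebra.mem_toSubmodule]
  exact mul_mem (mul_mem (hgen x (by simp) _) (hgen y (by simp) _)) (hgen z (by simp) _)

theorem linearIndependent_mk_z_pow {l : k} (hl : Function.Injective (l ^ · : ℕ → k))
    (hxy : x * y - y * x = 1) (hzx : z * x = l⁻¹ • (x * z)) (hzy : z * y = l • (y * z)) :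
    LinearIndependent k fun s : ℕ =>
      Submodule.Quotient.mk (p := commutatorSpan k A) (z ^ (s + 1)) := by
  have hl₀ := ne_zero_of_injective_pow hl
  have hΦ (s : ℕ) : commutatorSpan k A ≤ LinearMap.ker (traceFunctional bA l (s + 1)) := by
    have hs : l ^ (s + 1) ≠ 1 := by simpa using hl.ne s.succ_ne_zero
    refine LinearMap.commutatorSpan_le_ker _ (adjoin_eq_top_of_pbwBasis bA hbA) ?_
    rintro g (rfl | rfl | rfl)
    exacts [traceFunctional_mul_x_comm bA hbA hl₀ hxy hzx hs,
      traceFunctional_mul_y_comm bA hbA hxy hzy hs,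
      traceFunctional_mul_z_comm bA hbA hl₀ hzx hzy _]
  let Ψ := LinearMap.pi fun s => (commutatorSpan k A).liftQ _ (hΦ s)
  have hΨ : Ψ ∘ (fun s : ℕ => Submodule.Quotient.mk (z ^ (s + 1))) =
      fun t => Pi.single t (1 : k) := by
    ext t s
    simp [Ψ, traceFunctional_z_pow bA hbA, Pi.single_apply, eq_comm]
  exact LinearIndependent.of_comp Ψ (hΨ ▸ Pi.linearIndependent_single_one ℕ k)

end PBWBasis

end

/-- Let `λ ∈ k*` not be a root of unity (char k = 0), and `A` the algebra
generated by `x, y, z` with relations `x*y - y*x = 1`, `x*z = λ • (z*x)`,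
`y*z = λ⁻¹ • (z*y)` (with PBW basis `x^a y^b z^c`). Let `[A,A]` be the `k`-span of all
commutators. Then `1 ∈ [A,A]` (indeed `1 = [x,y]`), every element of `A` is, modulo
`[A,A]`, a `k`-linear combination of the `z^s` with `s ≥ 1`, and the classes of the
`z^s` (`s ≥ 1`) in `A/[A,A]` are linearly independent; hence
`A/[A,A] ≅ ⊕_{s ≥ 1} k·z̄^s`. -/
theorem stmt_19 {k : Type*} [Field k] [CharZero k] {A : Type*} [Ring A] [Algebra k A]
    (u : kˣ) (hu : ∀ m : ℕ, 0 < m → u ^ m ≠ 1) (x y z : A)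
    (hxy : x * y - y * x = 1)
    (hxz : x * z = (u : k) • (z * x))
    (hyz : y * z = ((u⁻¹ : kˣ) : k) • (z * y))
    (bA : Module.Basis (ℕ × ℕ × ℕ) k A)
    (hbA : ∀ p : ℕ × ℕ × ℕ, bA p = x ^ p.1 * y ^ p.2.1 * z ^ p.2.2) :
    (1 : A) ∈ Submodule.span k {w : A | ∃ a b : A, w = a * b - b * a} ∧
    (∀ w : A, ∃ p ∈ Submodule.span k (Set.range fun s : ℕ => z ^ (s + 1)),
      w - p ∈ Submodule.span k {w : A | ∃ a b : A, w = a * b - b * a}) ∧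
    LinearIndependent k fun s : ℕ =>
      Submodule.Quotient.mk
        (p := Submodule.span k {w : A | ∃ a b : A, w = a * b - b * a})
        (z ^ (s + 1)) := by
  have hl : Function.Injective fun n : ℕ => (u : k) ^ n := by
    have hinj : Function.Injective fun n : ℕ => u ^ n :=
      injective_pow_iff_not_isOfFinOrder.2 fun h => by
        obtain ⟨m, hm, hum⟩ := isOfFinOrder_iff_pow_eq_one.1 h
        exact hu m hm hum
    exact fun a b h => hinj (Units.ext (by push_cast; exact h))
  have hzx : z * x = (u : k)⁻¹ • (x * z) := mul_eq_inv_smul_of_mul_eq_smul hxz u.ne_zero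
  have hzy : z * y = (u : k) • (y * z) := by
    simpa using mul_eq_inv_smul_of_mul_eq_smul hyz (u⁻¹).ne_zero
  have hsup : span k (Set.range fun s : ℕ => z ^ (s + 1)) ⊔ commutatorSpan k A = ⊤ :=
    bA.eq_top_of_forall_mem fun p => hbA p ▸ monomial_mem_sup hl hxy hzx hzy _ _ _
  refine ⟨subset_span ⟨x, y, hxy.symm⟩, fun w => ?_,
    linearIndependent_mk_z_pow bA hbA hl hxy hzx hzy⟩
  obtain ⟨p, hp, q, hq, rfl⟩ := mem_sup.1 (hsup ▸ mem_top : w ∈ _)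
  exact ⟨p, hp, by rwa [add_sub_cancel_left]⟩
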